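/- arXiv:math/0505261 — 4 statements merged into one kernel-verified Lean document; each statement's English description precedes it below -/
import Mathlib

section
/- Let B be the *-algebra of continuous functions on ℝ generated by the set {x ↦ a(x+j) − a(x) : a ∈ C₀(ℝ), j ∈ ℤ}. Then B is dense in C₀(ℝ) with respect to the supremum norm. -/
open scoped ZeroAtInfty

open Finset in
/-- Key lemma: `-a` is approximated by averages of `a(·+kn) - a(·)`. -/
lemma neg_mem_closure_aux (a : C₀(ℝ, ℂ)) :
    -a ∈ closure ((NonUnitalStarAlgebra.adjoin ℂ
      {f : C₀(ℝ, ℂ) | ∃ (a : C₀(ℝ, ℂ)) (j : ℤ), ∀ x : ℝ, f x = a (x + j) - a x} :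
        NonUnitalStarSubalgebra ℂ C₀(ℝ, ℂ)) : Set C₀(ℝ, ℂ)) := by
  set B := (NonUnitalStarAlgebra.adjoin ℂ
      {f : C₀(ℝ, ℂ) | ∃ (a : C₀(ℝ, ℂ)) (j : ℤ), ∀ x : ℝ, f x = a (x + j) - a x} :
        NonUnitalStarSubalgebra ℂ C₀(ℝ, ℂ)) with hB
  rw [Metric.mem_closure_iff]
  intro ε hε
  obtain ⟨r, hr⟩ := ZeroAtInftyContinuousMapClass.norm_le a (ε / 4) (by positivity)
  -- choose an integer step `n` with `(n : ℝ) > 2 * r` and `n ≥ 1`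
  obtain ⟨n, hn⟩ := exists_nat_gt (max (2 * r) 0)
  have hn2r : 2 * r < (n : ℝ) := lt_of_le_of_lt (le_max_left _ _) hn
  -- choose the number of terms `M` with `‖a‖ / M < ε / 4` and `M ≥ 1`
  obtain ⟨M, hM⟩ := exists_nat_gt (max (‖a‖ / (ε / 4)) 0)
  have hM0 : (0 : ℝ) < M := lt_of_le_of_lt (le_max_right _ _) hM
  have hM0' : M ≠ 0 := by exact_mod_cast hM0.ne'
  have hMa : ‖a‖ < (M : ℝ) * (ε / 4) := by
    have h1 : ‖a‖ / (ε / 4) < (M : ℝ) := lt_of_le_of_lt (le_max_left _ _) hM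
    calc ‖a‖ = ‖a‖ / (ε / 4) * (ε / 4) := by field_simp
    _ < (M : ℝ) * (ε / 4) := by
        exact mul_lt_mul_of_pos_right h1 (by positivity)
  -- the shift maps
  let T : ℕ → C₀(ℝ, ℂ) := fun k =>
    a.comp ((Homeomorph.addRight ((k * n : ℕ) : ℝ)).toCocompactMap)
  have hT : ∀ k x, T k x = a (x + (k * n : ℕ)) := fun k x => rfl
  -- the approximating element
  let g : C₀(ℝ, ℂ) := ∑ k ∈ Finset.Icc 1 M, T k
  have hg : ∀ x, g x = ∑ k ∈ Finset.Icc 1 M, a (x + (k * n : ℕ)) := by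
    intro x
    let φ : C₀(ℝ, ℂ) →+ ℂ := AddMonoidHom.mk' (fun f => f x) (fun f g => rfl)
    show φ (∑ k ∈ Finset.Icc 1 M, T k) = _
    rw [map_sum]
    rfl
  let b : C₀(ℝ, ℂ) := (M : ℂ)⁻¹ • ∑ k ∈ Finset.Icc 1 M, (T k - a)
  have hbB : b ∈ B := by
    refine SMulMemClass.smul_mem _ (sum_mem fun k _ => ?_)
    refine NonUnitalStarAlgebra.subset_adjoin ℂ _ ?_
    refine ⟨a, (k * n : ℕ), fun x => ?_⟩
    rw [show (T k - a) x = T k x - a x from rfl, hT]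
    norm_cast
  refine ⟨b, hbB, ?_⟩
  -- compute `dist (-a) b = ‖(M)⁻¹ • g‖`
  have hMC : (M : ℂ) ≠ 0 := by exact_mod_cast hM0'
  have hb : b = (M : ℂ)⁻¹ • g - a := by
    ext x
    let ψ : C₀(ℝ, ℂ) →+ ℂ := AddMonoidHom.mk' (fun f => f x) (fun f g => rfl)
    have h1 : (∑ k ∈ Finset.Icc 1 M, (T k - a)) x = ∑ k ∈ Finset.Icc 1 M, (T k x - a x) := by
      show ψ _ = _
      rw [map_sum]
      rfl
    have hg' : g x = ∑ k ∈ Finset.Icc 1 M, T k x := by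
      show ψ _ = _
      rw [map_sum]
      rfl
    show (M : ℂ)⁻¹ * (∑ k ∈ Finset.Icc 1 M, (T k - a)) x = (M : ℂ)⁻¹ * g x - a x
    rw [h1, hg', Finset.sum_sub_distrib, Finset.sum_const, Nat.card_Icc, Nat.add_sub_cancel,
      nsmul_eq_mul, mul_sub, ← mul_assoc, inv_mul_cancel₀ hMC, one_mul]
  have hdist : dist (-a) b = ‖(M : ℂ)⁻¹ • g‖ := by
    rw [hb, dist_eq_norm, show -a - ((M : ℂ)⁻¹ • g - a) = -((M : ℂ)⁻¹ • g) by abel, norm_neg]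
  rw [hdist]
  -- pointwise bound on `g`
  have hgle : ‖g‖ ≤ ‖a‖ + (M : ℝ) * (ε / 4) := by
    rw [← ZeroAtInftyContinuousMap.norm_toBCF_eq_norm]
    refine BoundedContinuousFunction.norm_le (by positivity) |>.mpr fun x => ?_
    have : g.toBCF x = g x := rfl
    rw [this, hg]
    refine le_trans (norm_sum_le _ _) ?_
    -- split according to whether `‖x + k*n‖ ≤ r`
    set S := (Finset.Icc 1 M).filter (fun k => ‖x + ((k * n : ℕ) : ℝ)‖ ≤ r) with hS
    set S' := (Finset.Icc 1 M).filter (fun k => ¬ ‖x + ((k * n : ℕ) : ℝ)‖ ≤ r) with hS' 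
    have hcard : S.card ≤ 1 := by
      refine Finset.card_le_one.mpr fun k hk l hl => ?_
      simp only [hS, Finset.mem_filter, Finset.mem_Icc] at hk hl
      by_contra hkl
      have hne : (k : ℝ) ≠ l := by exact_mod_cast hkl
      have h1 : |(x + (k * n : ℕ)) - (x + (l * n : ℕ))| ≤ 2 * r := by
        calc |(x + ((k * n : ℕ):ℝ)) - (x + (l * n : ℕ))| ≤
            ‖x + ((k * n : ℕ):ℝ)‖ + ‖x + ((l * n : ℕ):ℝ)‖ := by
              rw [Real.norm_eq_abs, Real.norm_eq_abs]; exact abs_sub _ _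
        _ ≤ r + r := add_le_add hk.2 hl.2
        _ = 2 * r := by ring
      have h2 : (x + ((k * n : ℕ):ℝ)) - (x + (l * n : ℕ)) = ((k : ℝ) - l) * n := by
        push_cast; ring
      rw [h2, abs_mul] at h1
      have h3 : (1 : ℝ) ≤ |(k : ℝ) - l| := by
        have h5 : (1 : ℤ) ≤ |(k : ℤ) - (l : ℤ)| :=
          Int.one_le_abs (sub_ne_zero.mpr (by exact_mod_cast hkl))
        exact_mod_cast h5
      have h4 : |(n : ℝ)| = n := abs_of_nonneg (by positivity)
      rw [h4] at h1
      have : (n : ℝ) ≤ 2 * r := le_trans (le_mul_of_one_le_left (by positivity) h3) h1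
      linarith
    calc ∑ k ∈ Finset.Icc 1 M, ‖a (x + ((k * n : ℕ):ℝ))‖
        = (∑ k ∈ S, ‖a (x + ((k * n : ℕ):ℝ))‖) +
          ∑ k ∈ S', ‖a (x + ((k * n : ℕ):ℝ))‖ :=
          (Finset.sum_filter_add_sum_filter_not (Finset.Icc 1 M)
            (fun k => ‖x + ((k * n : ℕ) : ℝ)‖ ≤ r) _).symm
      _ ≤ (∑ _k ∈ S, ‖a‖) + ∑ _k ∈ S', (ε / 4) := by
          refine add_le_add (Finset.sum_le_sum fun k _ => ?_)
            (Finset.sum_le_sum fun k hk => ?_)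
          · calc ‖a (x + ((k * n : ℕ):ℝ))‖ = ‖a.toBCF (x + ((k * n : ℕ):ℝ))‖ := rfl
            _ ≤ ‖a.toBCF‖ := BoundedContinuousFunction.norm_coe_le_norm _ _
            _ = ‖a‖ := ZeroAtInftyContinuousMap.norm_toBCF_eq_norm
          · simp only [hS', Finset.mem_filter, not_le] at hk
            exact le_of_lt (hr _ hk.2)
      _ ≤ 1 * ‖a‖ + (M : ℝ) * (ε / 4) := by
          rw [Finset.sum_const, Finset.sum_const, nsmul_eq_mul, nsmul_eq_mul]
          refine add_le_add (mul_le_mul_of_nonneg_right ?_ (norm_nonneg _))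
            (mul_le_mul_of_nonneg_right ?_ (by positivity))
          · exact_mod_cast hcard
          · have hcard2 : S'.card ≤ M := le_trans
              (Finset.card_le_card (Finset.filter_subset _ _)) (by simp)
            exact_mod_cast hcard2
      _ = ‖a‖ + (M : ℝ) * (ε / 4) := by ring
  have hns : ‖(M : ℂ)⁻¹ • g‖ = (M : ℝ)⁻¹ * ‖g‖ := by
    rw [← ZeroAtInftyContinuousMap.norm_toBCF_eq_norm,
      ← ZeroAtInftyContinuousMap.norm_toBCF_eq_norm (f := g),
      show ((M : ℂ)⁻¹ • g).toBCF = (M : ℂ)⁻¹ • g.toBCF from rfl,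
      norm_smul, norm_inv, Complex.norm_natCast]
  calc ‖(M : ℂ)⁻¹ • g‖ = (M : ℝ)⁻¹ * ‖g‖ := hns
    _ ≤ (M : ℝ)⁻¹ * (‖a‖ + (M : ℝ) * (ε / 4)) := by
        exact mul_le_mul_of_nonneg_left hgle (by positivity)
    _ < ε := by
        rw [mul_add]
        have h1 : (M : ℝ)⁻¹ * ‖a‖ < ε / 4 := by
          rw [inv_mul_lt_iff₀ hM0]
          linarith [hMa]
        have h2 : (M : ℝ)⁻¹ * ((M : ℝ) * (ε / 4)) = ε / 4 := by field_simp
        linarith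

/-- The *-algebra generated by `{x ↦ a(x+j) − a(x) : a ∈ C₀(ℝ), j ∈ ℤ}`
is dense in `C₀(ℝ)` (sup norm). -/
theorem stmt_1 :
    Dense ((NonUnitalStarAlgebra.adjoin ℂ
      {f : C₀(ℝ, ℂ) | ∃ (a : C₀(ℝ, ℂ)) (j : ℤ), ∀ x : ℝ, f x = a (x + j) - a x} :
        NonUnitalStarSubalgebra ℂ C₀(ℝ, ℂ)) : Set C₀(ℝ, ℂ)) := by
  rw [dense_iff_closure_eq, Set.eq_univ_iff_forall]
  intro f
  have h := neg_mem_closure_aux (-f)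
  rwa [neg_neg] at h
end

section
/- Let A# be the closure in C_b(ℝ) of the algebra generated by CS(ℝ) and the 2π-periodic continuous functions P_{2π}. Fix χ₊, χ₋ ∈ CS(ℝ) with χ₊ + χ₋ = 1, χ_±(±∞) = 1, and χ_±(t) = 0 for ∓t > 1. Then every a ∈ A# can be written uniquely as a = a₊χ₊ + a₋χ₋ + a₀ with a₊, a₋ ∈ P_{2π} and a₀ ∈ C₀(ℝ). -/
open Filter Topology Real BoundedContinuousFunction

/-- Bounded continuous functions on `ℝ` with limits at `±∞` (`CS(ℝ)`). -/
def CSset : Set (ℝ →ᵇ ℂ) :=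
  {f | (∃ l : ℂ, Tendsto f atTop (𝓝 l)) ∧ ∃ l : ℂ, Tendsto f atBot (𝓝 l)}

/-- Continuous `2π`-periodic functions `P_{2π}`. -/
def P2pi : Set (ℝ →ᵇ ℂ) := {f | Function.Periodic f (2 * π)}

/-- Continuous functions vanishing at `±∞` (`C₀(ℝ)`). -/
def C0set : Set (ℝ →ᵇ ℂ) :=
  {f | Tendsto f atTop (𝓝 0) ∧ Tendsto f atBot (𝓝 0)}

/-- `A#`: the closure in `C_b(ℝ)` of the algebra generated by `CS(ℝ)` and `P_{2π}`. -/
noncomputable def Asharp : Subalgebra ℂ (ℝ →ᵇ ℂ) :=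
  (Algebra.adjoin ℂ (CSset ∪ P2pi)).topologicalClosure

namespace Stmt7Aux

/-- The set of functions admitting a decomposition. -/
def Dset (χp χm : ℝ →ᵇ ℂ) : Set (ℝ →ᵇ ℂ) :=
  {a | ∃ p q c : ℝ →ᵇ ℂ, p ∈ P2pi ∧ q ∈ P2pi ∧ c ∈ C0set ∧ a = p * χp + q * χm + c}

lemma tendsto_shift_top (s : ℝ) :
    Tendsto (fun n : ℕ => s + n * (2 * π)) atTop atTop := by
  apply tendsto_atTop_add_const_left
  exact Tendsto.atTop_mul_const (by positivity) tendsto_natCast_atTop_atTop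

lemma tendsto_shift_bot (s : ℝ) :
    Tendsto (fun n : ℕ => s - n * (2 * π)) atTop atBot := by
  have htop : Tendsto (fun n : ℕ => (n : ℝ) * (2 * π)) atTop atTop :=
    Tendsto.atTop_mul_const (by positivity) tendsto_natCast_atTop_atTop
  rw [tendsto_atBot]
  intro b
  filter_upwards [htop.eventually (eventually_ge_atTop (s - b))] with n hn
  linarith

section chi

variable {χp χm : ℝ →ᵇ ℂ}

lemma chim_top (hm0 : ∀ t : ℝ, 1 < t → χm t = 0) : Tendsto χm atTop (𝓝 0) := by
  apply Tendsto.congr' _ (tendsto_const_nhds (x := (0:ℂ)))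
  filter_upwards [eventually_gt_atTop (1:ℝ)] with t ht
  exact (hm0 t ht).symm

lemma chip_bot (hp0 : ∀ t : ℝ, t < -1 → χp t = 0) : Tendsto χp atBot (𝓝 0) := by
  apply Tendsto.congr' _ (tendsto_const_nhds (x := (0:ℂ)))
  filter_upwards [eventually_lt_atBot (-1:ℝ)] with t ht
  exact (hp0 t ht).symm

/-- Along shifts to `+∞`, `a` converges pointwise to the `+`-periodic part. -/
lemma key_top (hp1 : Tendsto χp atTop (𝓝 1)) (hm0 : ∀ t : ℝ, 1 < t → χm t = 0)
    {p q c a : ℝ →ᵇ ℂ} (hp : p ∈ P2pi) (hc : c ∈ C0set)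
    (ha : a = p * χp + q * χm + c) (s : ℝ) :
    Tendsto (fun n : ℕ => a (s + n * (2 * π))) atTop (𝓝 (p s)) := by
  have hev : ∀ n : ℕ, a (s + n * (2 * π)) =
      p s * χp (s + n * (2 * π)) + q (s + n * (2 * π)) * χm (s + n * (2 * π))
        + c (s + n * (2 * π)) := by
    intro n
    simp [ha, (hp.nat_mul n) s]
  have hmz : Tendsto (fun n : ℕ => q (s + n * (2 * π)) * χm (s + n * (2 * π)))
      atTop (𝓝 0) := by
    apply Tendsto.congr' _ (tendsto_const_nhds (x := (0:ℂ)))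
    filter_upwards [(tendsto_shift_top s).eventually (eventually_gt_atTop (1:ℝ))] with n hn
    rw [hm0 _ hn, mul_zero]
  have h1 : Tendsto (fun n : ℕ => p s * χp (s + n * (2 * π))) atTop (𝓝 (p s * 1)) :=
    (tendsto_const_nhds.mul (hp1.comp (tendsto_shift_top s)))
  have h3 : Tendsto (fun n : ℕ => c (s + n * (2 * π))) atTop (𝓝 0) :=
    hc.1.comp (tendsto_shift_top s)
  have := (h1.add hmz).add h3
  simp only [mul_one, add_zero] at this
  exact Tendsto.congr (fun n => (hev n).symm) this

/-- Along shifts to `-∞`, `a` converges pointwise to the `-`-periodic part. -/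
lemma key_bot (hm1 : Tendsto χm atBot (𝓝 1)) (hp0 : ∀ t : ℝ, t < -1 → χp t = 0)
    {p q c a : ℝ →ᵇ ℂ} (hq : q ∈ P2pi) (hc : c ∈ C0set)
    (ha : a = p * χp + q * χm + c) (s : ℝ) :
    Tendsto (fun n : ℕ => a (s - n * (2 * π))) atTop (𝓝 (q s)) := by
  have hev : ∀ n : ℕ, a (s - n * (2 * π)) =
      p (s - n * (2 * π)) * χp (s - n * (2 * π)) + q s * χm (s - n * (2 * π))
        + c (s - n * (2 * π)) := by
    intro n
    simp [ha, hq.sub_nat_mul_eq n]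
  have hpz : Tendsto (fun n : ℕ => p (s - n * (2 * π)) * χp (s - n * (2 * π)))
      atTop (𝓝 0) := by
    apply Tendsto.congr' _ (tendsto_const_nhds (x := (0:ℂ)))
    filter_upwards [(tendsto_shift_bot s).eventually (eventually_lt_atBot (-1:ℝ))] with n hn
    rw [hp0 _ hn, mul_zero]
  have h2 : Tendsto (fun n : ℕ => q s * χm (s - n * (2 * π))) atTop (𝓝 (q s * 1)) :=
    (tendsto_const_nhds.mul (hm1.comp (tendsto_shift_bot s)))
  have h3 : Tendsto (fun n : ℕ => c (s - n * (2 * π))) atTop (𝓝 0) :=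
    hc.2.comp (tendsto_shift_bot s)
  have := (hpz.add h2).add h3
  simp only [mul_one, zero_add, add_zero] at this
  exact Tendsto.congr (fun n => (hev n).symm) this

/-- Norm bounds for the periodic components. -/
lemma norm_bound (hp1 : Tendsto χp atTop (𝓝 1)) (hm1 : Tendsto χm atBot (𝓝 1))
    (hp0 : ∀ t : ℝ, t < -1 → χp t = 0) (hm0 : ∀ t : ℝ, 1 < t → χm t = 0)
    {p q c a : ℝ →ᵇ ℂ} (hp : p ∈ P2pi) (hq : q ∈ P2pi) (hc : c ∈ C0set)
    (ha : a = p * χp + q * χm + c) : ‖p‖ ≤ ‖a‖ ∧ ‖q‖ ≤ ‖a‖ := by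
  constructor
  · refine (norm_le (norm_nonneg a)).2 fun s => ?_
    exact le_of_tendsto (key_top hp1 hm0 hp hc ha s).norm
      (Eventually.of_forall fun n => a.norm_coe_le_norm _)
  · refine (norm_le (norm_nonneg a)).2 fun s => ?_
    exact le_of_tendsto (key_bot hm1 hp0 hq hc ha s).norm
      (Eventually.of_forall fun n => a.norm_coe_le_norm _)

/-- Uniqueness of the decomposition. -/
lemma unique_decomp (hp1 : Tendsto χp atTop (𝓝 1)) (hm1 : Tendsto χm atBot (𝓝 1))
    (hp0 : ∀ t : ℝ, t < -1 → χp t = 0) (hm0 : ∀ t : ℝ, 1 < t → χm t = 0)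
    {p q c p' q' c' a : ℝ →ᵇ ℂ} (hp : p ∈ P2pi) (hq : q ∈ P2pi) (hc : c ∈ C0set)
    (ha : a = p * χp + q * χm + c)
    (hp' : p' ∈ P2pi) (hq' : q' ∈ P2pi) (hc' : c' ∈ C0set)
    (ha' : a = p' * χp + q' * χm + c') : p = p' ∧ q = q' ∧ c = c' := by
  have hpp : p = p' := by
    ext s
    exact tendsto_nhds_unique (key_top hp1 hm0 hp hc ha s) (key_top hp1 hm0 hp' hc' ha' s)
  have hqq : q = q' := by
    ext s
    exact tendsto_nhds_unique (key_bot hm1 hp0 hq hc ha s) (key_bot hm1 hp0 hq' hc' ha' s)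
  refine ⟨hpp, hqq, ?_⟩
  have := ha.symm.trans ha'
  rw [hpp, hqq] at this
  exact (add_left_cancel this).symm ▸ rfl

/-- `C₀` basic closure properties. -/
lemma C0_zero : (0 : ℝ →ᵇ ℂ) ∈ C0set := by
  constructor <;> · simpa [Pi.zero_def] using tendsto_const_nhds (x := (0:ℂ))

lemma C0_add {c d : ℝ →ᵇ ℂ} (hc : c ∈ C0set) (hd : d ∈ C0set) : c + d ∈ C0set := by
  constructor
  · simpa [Pi.add_def] using (hc.1.add hd.1)
  · simpa [Pi.add_def] using (hc.2.add hd.2)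

lemma C0_sub {c d : ℝ →ᵇ ℂ} (hc : c ∈ C0set) (hd : d ∈ C0set) : c - d ∈ C0set := by
  constructor
  · simpa [Pi.sub_def] using (hc.1.sub hd.1)
  · simpa [Pi.sub_def] using (hc.2.sub hd.2)

lemma C0_mul_left (f : ℝ →ᵇ ℂ) {c : ℝ →ᵇ ℂ} (hc : c ∈ C0set) : f * c ∈ C0set := by
  have key : ∀ l : Filter ℝ, Tendsto c l (𝓝 0) → Tendsto (f * c) l (𝓝 0) := by
    intro l hcl
    have hb : ∀ t, ‖(f * c) t‖ ≤ ‖f‖ * ‖c t‖ := by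
      intro t
      calc ‖(f * c) t‖ = ‖f t‖ * ‖c t‖ := by simp [norm_mul]
        _ ≤ ‖f‖ * ‖c t‖ :=
          mul_le_mul_of_nonneg_right (f.norm_coe_le_norm t) (norm_nonneg _)
    have hn : Tendsto (fun t => ‖f‖ * ‖c t‖) l (𝓝 0) := by
      have : Tendsto (fun t => ‖c t‖) l (𝓝 0) := by simpa using hcl.norm
      simpa using this.const_mul ‖f‖
    exact squeeze_zero_norm hb hn
  exact ⟨key _ hc.1, key _ hc.2⟩

lemma C0_mul_right (f : ℝ →ᵇ ℂ) {c : ℝ →ᵇ ℂ} (hc : c ∈ C0set) : c * f ∈ C0set := by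
  rw [mul_comm]; exact C0_mul_left f hc

lemma chi_mul_mem (hp1 : Tendsto χp atTop (𝓝 1)) (hm1 : Tendsto χm atBot (𝓝 1))
    (hp0 : ∀ t : ℝ, t < -1 → χp t = 0) (hm0 : ∀ t : ℝ, 1 < t → χm t = 0) :
    χp * χm ∈ C0set := by
  constructor
  · have := hp1.mul (chim_top hm0)
    simpa [Pi.mul_def] using this
  · have := (chip_bot hp0).mul hm1
    simpa [Pi.mul_def] using this

/-- Constants are periodic. -/
lemma const_mem_P2pi (z : ℂ) : (BoundedContinuousFunction.const ℝ z) ∈ P2pi := by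
  intro x; simp

lemma P2pi_add {p q : ℝ →ᵇ ℂ} (hp : p ∈ P2pi) (hq : q ∈ P2pi) : p + q ∈ P2pi := by
  intro x; simp [hp x, hq x]

lemma P2pi_sub {p q : ℝ →ᵇ ℂ} (hp : p ∈ P2pi) (hq : q ∈ P2pi) : p - q ∈ P2pi := by
  intro x; simp [hp x, hq x]

lemma P2pi_mul {p q : ℝ →ᵇ ℂ} (hp : p ∈ P2pi) (hq : q ∈ P2pi) : p * q ∈ P2pi := by
  intro x; simp [hp x, hq x]

/-- The difference of two decomposable functions is decomposable componentwise. -/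
lemma Dset_sub {a b : ℝ →ᵇ ℂ} (ha : a ∈ Dset χp χm) (hb : b ∈ Dset χp χm) :
    a - b ∈ Dset χp χm := by
  obtain ⟨p, q, c, hp, hq, hc, hd⟩ := ha
  obtain ⟨p', q', c', hp', hq', hc', hd'⟩ := hb
  exact ⟨p - p', q - q', c - c', P2pi_sub hp hp', P2pi_sub hq hq', C0_sub hc hc',
    by rw [hd, hd']; ring⟩

set_option synthInstance.maxHeartbeats 1000000 in
/-- `Dset` is closed. -/
lemma Dset_closed (hp1 : Tendsto χp atTop (𝓝 1)) (hm1 : Tendsto χm atBot (𝓝 1))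
    (hp0 : ∀ t : ℝ, t < -1 → χp t = 0) (hm0 : ∀ t : ℝ, 1 < t → χm t = 0) :
    IsClosed (Dset χp χm) := by
  apply IsSeqClosed.isClosed (X := ℝ →ᵇ ℂ)
  intro u a hu hua
  choose pn qn cn hpn hqn hcn hdn using hu
  -- the periodic components form Cauchy sequences
  have hbound : ∀ m n : ℕ, dist (pn m) (pn n) ≤ dist (u m) (u n) ∧
      dist (qn m) (qn n) ≤ dist (u m) (u n) := by
    intro m n
    have hsub : u m - u n = (pn m - pn n) * χp + (qn m - qn n) * χm + (cn m - cn n) := by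
      rw [hdn m, hdn n]; ring
    have := norm_bound hp1 hm1 hp0 hm0 (P2pi_sub (hpn m) (hpn n))
      (P2pi_sub (hqn m) (hqn n)) (C0_sub (hcn m) (hcn n)) hsub
    simpa [dist_eq_norm] using this
  have hcu : CauchySeq u := hua.cauchySeq
  have hcp : CauchySeq pn := by
    rw [Metric.cauchySeq_iff] at hcu ⊢
    intro ε hε
    obtain ⟨N, hN⟩ := hcu ε hε
    exact ⟨N, fun m hm n hn => lt_of_le_of_lt (hbound m n).1 (hN m hm n hn)⟩
  have hcq : CauchySeq qn := by
    rw [Metric.cauchySeq_iff] at hcu ⊢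
    intro ε hε
    obtain ⟨N, hN⟩ := hcu ε hε
    exact ⟨N, fun m hm n hn => lt_of_le_of_lt (hbound m n).2 (hN m hm n hn)⟩
  obtain ⟨p, hp⟩ := cauchySeq_tendsto_of_complete hcp
  obtain ⟨q, hq⟩ := cauchySeq_tendsto_of_complete hcq
  -- pointwise convergence
  have hptx : ∀ x, Tendsto (fun n => pn n x) atTop (𝓝 (p x)) := fun x =>
    ((tendsto_iff_tendstoUniformly.mp hp).tendsto_at x)
  have hqtx : ∀ x, Tendsto (fun n => qn n x) atTop (𝓝 (q x)) := fun x =>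
    ((tendsto_iff_tendstoUniformly.mp hq).tendsto_at x)
  have hpP : p ∈ P2pi := by
    intro x
    exact tendsto_nhds_unique (((hptx (x + 2 * π)).congr (fun n => (hpn n) x))) (hptx x)
  have hqP : q ∈ P2pi := by
    intro x
    exact tendsto_nhds_unique (((hqtx (x + 2 * π)).congr (fun n => (hqn n) x))) (hqtx x)
  set c := a - p * χp - q * χm with hcdef
  have hcn_tend : Tendsto cn atTop (𝓝 c) := by
    have : ∀ n, cn n = u n - pn n * χp - qn n * χm := by
      intro n; rw [hdn n]; ring
    have htend : Tendsto (fun n => u n - pn n * χp - qn n * χm) atTop (𝓝 c) := by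
      exact (hua.sub ((hp.mul tendsto_const_nhds))).sub ((hq.mul tendsto_const_nhds))
    exact htend.congr (fun n => (this n).symm)
  have hcC : c ∈ C0set := by
    constructor
    · rw [Metric.tendsto_nhds]
      intro ε hε
      obtain ⟨n, hn⟩ := (Metric.tendsto_nhds.mp hcn_tend (ε/2) (by linarith)).exists
      have h1 := Metric.tendsto_nhds.mp (hcn n).1 (ε/2) (by linarith)
      filter_upwards [h1] with t ht
      calc dist (c t) 0 ≤ dist (c t) (cn n t) + dist (cn n t) 0 := dist_triangle _ _ _
        _ ≤ dist c (cn n) + dist (cn n t) 0 :=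
          add_le_add (dist_coe_le_dist t) le_rfl
        _ < ε / 2 + ε / 2 := by
          refine add_lt_add (by rw [dist_comm]; exact hn) ht
        _ = ε := by ring
    · rw [Metric.tendsto_nhds]
      intro ε hε
      obtain ⟨n, hn⟩ := (Metric.tendsto_nhds.mp hcn_tend (ε/2) (by linarith)).exists
      have h1 := Metric.tendsto_nhds.mp (hcn n).2 (ε/2) (by linarith)
      filter_upwards [h1] with t ht
      calc dist (c t) 0 ≤ dist (c t) (cn n t) + dist (cn n t) 0 := dist_triangle _ _ _
        _ ≤ dist c (cn n) + dist (cn n t) 0 :=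
          add_le_add (dist_coe_le_dist t) le_rfl
        _ < ε / 2 + ε / 2 := by
          refine add_lt_add (by rw [dist_comm]; exact hn) ht
        _ = ε := by ring
  exact ⟨p, q, c, hpP, hqP, hcC, by rw [hcdef]; ring⟩

end chi

end Stmt7Aux

open Stmt7Aux in
/-- Every `a ∈ A#` decomposes uniquely as `a = a₊χ₊ + a₋χ₋ + a₀` with
`a₊, a₋ ∈ P_{2π}` and `a₀ ∈ C₀(ℝ)`. -/
theorem stmt_7
    (χp χm : ℝ →ᵇ ℂ)
    (hsum : χp + χm = 1)
    (hp1 : Tendsto χp atTop (𝓝 1)) (hm1 : Tendsto χm atBot (𝓝 1))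
    (hp0 : ∀ t : ℝ, t < -1 → χp t = 0) (hm0 : ∀ t : ℝ, 1 < t → χm t = 0)
    (hpCS : χp ∈ CSset) (hmCS : χm ∈ CSset) :
    ∀ a ∈ Asharp, ∃! p : (ℝ →ᵇ ℂ) × (ℝ →ᵇ ℂ) × (ℝ →ᵇ ℂ),
      p.1 ∈ P2pi ∧ p.2.1 ∈ P2pi ∧ p.2.2 ∈ C0set ∧
        a = p.1 * χp + p.2.1 * χm + p.2.2 := by
  have hχm : χm = 1 - χp := by rw [← hsum]; ring
  -- generators are decomposable
  have hgen : CSset ∪ P2pi ⊆ Dset χp χm := by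
    rintro f (⟨⟨lp, hlp⟩, ⟨lm, hlm⟩⟩ | hf)
    · refine ⟨BoundedContinuousFunction.const ℝ lp, BoundedContinuousFunction.const ℝ lm,
        f - BoundedContinuousFunction.const ℝ lp * χp
          - BoundedContinuousFunction.const ℝ lm * χm,
        const_mem_P2pi _, const_mem_P2pi _, ?_, by ring⟩
      constructor
      · have h : Tendsto (fun t => f t - lp * χp t - lm * χm t) atTop
            (𝓝 (lp - lp * 1 - lm * 0)) :=
          (hlp.sub ((tendsto_const_nhds : Tendsto (fun _ : ℝ => lp) atTop (𝓝 lp)).mul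
            hp1)).sub
            ((tendsto_const_nhds : Tendsto (fun _ : ℝ => lm) atTop (𝓝 lm)).mul
              (chim_top hm0))
        have h0 : lp - lp * 1 - lm * 0 = 0 := by ring
        rw [h0] at h
        exact h.congr (fun t => by simp)
      · have h : Tendsto (fun t => f t - lp * χp t - lm * χm t) atBot
            (𝓝 (lm - lp * 0 - lm * 1)) :=
          (hlm.sub ((tendsto_const_nhds : Tendsto (fun _ : ℝ => lp) atBot (𝓝 lp)).mul
            (chip_bot hp0))).sub
            ((tendsto_const_nhds : Tendsto (fun _ : ℝ => lm) atBot (𝓝 lm)).mul hm1)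
        have h0 : lm - lp * 0 - lm * 1 = 0 := by ring
        rw [h0] at h
        exact h.congr (fun t => by simp)
    · exact ⟨f, f, 0, hf, hf, C0_zero, by rw [add_zero, ← mul_add, hsum, mul_one]⟩
  -- the algebra they generate is decomposable
  have hadj : (Algebra.adjoin ℂ (CSset ∪ P2pi) : Set (ℝ →ᵇ ℂ)) ⊆ Dset χp χm := by
    intro x hx
    induction hx using Algebra.adjoin_induction with
    | mem x hx => exact hgen hx
    | algebraMap r =>
        refine ⟨algebraMap ℂ (ℝ →ᵇ ℂ) r, algebraMap ℂ (ℝ →ᵇ ℂ) r, 0, ?_, ?_, C0_zero, ?_⟩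
        · intro x; simp
        · intro x; simp
        · rw [add_zero, ← mul_add, hsum, mul_one]
    | add x y hx hy ihx ihy =>
        obtain ⟨p, q, c, hp, hq, hc, hd⟩ := ihx
        obtain ⟨p', q', c', hp', hq', hc', hd'⟩ := ihy
        exact ⟨p + p', q + q', c + c', P2pi_add hp hp', P2pi_add hq hq', C0_add hc hc',
          by rw [hd, hd']; ring⟩
    | mul x y hx hy ihx ihy =>
        obtain ⟨p, q, c, hp, hq, hc, hd⟩ := ihx
        obtain ⟨p', q', c', hp', hq', hc', hd'⟩ := ihy
        refine ⟨p * p', q * q',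
          (p * q' + q * p' - p * p' - q * q') * (χp * χm)
            + (p * χp + q * χm + c) * c' + c * (p' * χp + q' * χm),
          P2pi_mul hp hp', P2pi_mul hq hq', ?_, ?_⟩
        · refine C0_add (C0_add (C0_mul_left _ (chi_mul_mem hp1 hm1 hp0 hm0)) ?_) ?_
          · exact C0_mul_left _ hc'
          · exact C0_mul_right _ hc
        · rw [hd, hd', hχm]; ring
  -- pass to the closure
  intro a ha
  have ha' : a ∈ closure ((Algebra.adjoin ℂ (CSset ∪ P2pi) : Subalgebra ℂ (ℝ →ᵇ ℂ)) :
      Set (ℝ →ᵇ ℂ)) := ha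
  have haD : a ∈ Dset χp χm :=
    closure_minimal hadj (Dset_closed hp1 hm1 hp0 hm0) ha'
  obtain ⟨p, q, c, hp, hq, hc, hd⟩ := haD
  refine ⟨(p, q, c), ⟨hp, hq, hc, hd⟩, ?_⟩
  rintro ⟨p', q', c'⟩ ⟨hp', hq', hc', hd'⟩
  obtain ⟨h1, h2, h3⟩ := unique_decomp hp1 hm1 hp0 hm0 hp' hq' hc' hd' hp hq hc hd
  simp only [Prod.mk.injEq]
  exact ⟨h1, h2, h3⟩
end

section
/- The set A#₀ = {a₊χ₊ + a₋χ₋ + a₀ : a₊, a₋ ∈ P_{2π}, a₀ ∈ C₀(ℝ)} is closed in C_b(ℝ): if f_n = a_nχ₊ + b_nχ₋ + c_n converges uniformly to d, then (a_n) and (b_n) are uniformly Cauchy in P_{2π}, and d ∈ A#₀. In particular ‖a_n‖_∞ ≤ ‖f_n‖_∞ for the uniquely determined periodic parts. -/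
open Filter Topology Real BoundedContinuousFunction

private lemma aux_eval_sum (χp χm : ℝ →ᵇ ℂ) (hsum : χp + χm = 1) (x : ℝ) :
    χp x + χm x = 1 := by
  have := congrArg (fun g : ℝ →ᵇ ℂ => g x) hsum
  simpa using this

private lemma aux_norm_p (χp χm : ℝ →ᵇ ℂ) (hsum : χp + χm = 1)
    (hm0 : ∀ t : ℝ, 1 < t → χm t = 0)
    (ap am a0 : ℝ →ᵇ ℂ) (hap : ap ∈ P2pi) (ha0 : Tendsto a0 atTop (𝓝 0)) :
    ‖ap‖ ≤ ‖ap * χp + am * χm + a0‖ := by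
  set f := ap * χp + am * χm + a0 with hf
  refine (BoundedContinuousFunction.norm_le (norm_nonneg f)).mpr fun t => ?_
  set s : ℕ → ℝ := fun n => t + n * (2*π) with hs
  have hst : Tendsto s atTop atTop := by
    apply tendsto_atTop_add_const_left
    exact (tendsto_natCast_atTop_atTop (R := ℝ)).atTop_mul_const (by positivity)
  have hev : ∀ᶠ n in atTop, 1 < s n := hst.eventually_gt_atTop 1
  have hkey : ∀ n : ℕ, 1 < s n → ‖ap t‖ ≤ ‖f‖ + ‖a0 (s n)‖ := by
    intro n hn
    have hm : χm (s n) = 0 := hm0 _ hn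
    have hp : χp (s n) = 1 := by
      have := aux_eval_sum χp χm hsum (s n); rw [hm] at this; simpa using this
    have hper : ap (s n) = ap t := (hap.nat_mul n) t
    have hfs : f (s n) = ap t + a0 (s n) := by
      simp [hf, hm, hp, hper]
    have : ap t = f (s n) - a0 (s n) := by rw [hfs]; ring
    rw [this]
    exact (norm_sub_le _ _).trans (add_le_add (f.norm_coe_le_norm _) le_rfl)
  have hlim : Tendsto (fun n => ‖f‖ + ‖a0 (s n)‖) atTop (𝓝 ‖f‖) := by
    have : Tendsto (fun n => ‖a0 (s n)‖) atTop (𝓝 0) := by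
      simpa using ((ha0.comp hst).norm)
    simpa using tendsto_const_nhds.add this
  exact ge_of_tendsto hlim (hev.mono hkey)

private lemma aux_norm_m (χp χm : ℝ →ᵇ ℂ) (hsum : χp + χm = 1)
    (hp0 : ∀ t : ℝ, t < -1 → χp t = 0)
    (ap am a0 : ℝ →ᵇ ℂ) (ham : am ∈ P2pi) (ha0 : Tendsto a0 atBot (𝓝 0)) :
    ‖am‖ ≤ ‖ap * χp + am * χm + a0‖ := by
  set f := ap * χp + am * χm + a0 with hf
  refine (BoundedContinuousFunction.norm_le (norm_nonneg f)).mpr fun t => ?_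
  set s : ℕ → ℝ := fun n => t - n * (2*π) with hs
  have hst : Tendsto s atTop atBot := by
    apply tendsto_atBot_add_const_left _ t
    exact tendsto_neg_atBot_iff.mpr <|
      (tendsto_natCast_atTop_atTop (R := ℝ)).atTop_mul_const (by positivity)
  have hev : ∀ᶠ n in atTop, s n < -1 := hst.eventually_lt_atBot (-1)
  have hkey : ∀ n : ℕ, s n < -1 → ‖am t‖ ≤ ‖f‖ + ‖a0 (s n)‖ := by
    intro n hn
    have hp : χp (s n) = 0 := hp0 _ hn
    have hm : χm (s n) = 1 := by
      have := aux_eval_sum χp χm hsum (s n); rw [hp] at this; simpa using this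
    have hper : am (s n) = am t := (ham.nat_mul n).sub_eq t
    have hfs : f (s n) = am t + a0 (s n) := by
      simp [hf, hm, hp, hper]
    have : am t = f (s n) - a0 (s n) := by rw [hfs]; ring
    rw [this]
    exact (norm_sub_le _ _).trans (add_le_add (f.norm_coe_le_norm _) le_rfl)
  have hlim : Tendsto (fun n => ‖f‖ + ‖a0 (s n)‖) atTop (𝓝 ‖f‖) := by
    have : Tendsto (fun n => ‖a0 (s n)‖) atTop (𝓝 0) := by
      simpa using ((ha0.comp hst).norm)
    simpa using tendsto_const_nhds.add this
  exact ge_of_tendsto hlim (hev.mono hkey)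

private lemma aux_cauchy_of_le {u v : ℕ → ℝ →ᵇ ℂ} (hv : CauchySeq v)
    (h : ∀ m n, ‖u m - u n‖ ≤ ‖v m - v n‖) : CauchySeq u := by
  rw [Metric.cauchySeq_iff] at hv ⊢
  intro ε hε
  obtain ⟨N, hN⟩ := hv ε hε
  refine ⟨N, fun m hm n hn => ?_⟩
  have := hN m hm n hn
  rw [dist_eq_norm] at this ⊢
  exact lt_of_le_of_lt (h m n) this

private lemma aux_tendsto_zero {g : ℕ → ℝ →ᵇ ℂ} {G : ℝ →ᵇ ℂ}
    (hg : Tendsto g atTop (𝓝 G)) (l : Filter ℝ)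
    (h : ∀ n, Tendsto (g n) l (𝓝 0)) : Tendsto (⇑G) l (𝓝 0) := by
  rw [Metric.tendsto_nhds]
  intro ε hε
  obtain ⟨n, hn⟩ := (Metric.tendsto_nhds.mp hg (ε/2) (by positivity)).exists
  have h2 := Metric.tendsto_nhds.mp (h n) (ε/2) (by positivity)
  filter_upwards [h2] with x hx
  have h3 : ‖G x - g n x‖ ≤ ‖G - g n‖ := by
    have := (G - g n).norm_coe_le_norm x
    simpa using this
  have h4 : ‖G - g n‖ < ε/2 := by
    rw [dist_eq_norm, ← norm_neg] at hn; simpa [neg_sub] using hn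
  rw [dist_zero_right] at hx ⊢
  calc ‖G x‖ ≤ ‖G x - g n x‖ + ‖g n x‖ := by
        simpa using norm_add_le (G x - g n x) (g n x)
    _ < ε/2 + ε/2 := add_lt_add (lt_of_le_of_lt h3 h4) hx
    _ = ε := by ring

set_option synthInstance.maxHeartbeats 400000 in
/-- `A#₀ = {a₊χ₊ + a₋χ₋ + a₀}` is closed in `C_b(ℝ)`, and for such a
decomposition the periodic parts satisfy `‖a₊‖ ≤ ‖f‖` and `‖a₋‖ ≤ ‖f‖`. -/
theorem stmt_8
    (χp χm : ℝ →ᵇ ℂ)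
    (hsum : χp + χm = 1)
    (hp1 : Tendsto χp atTop (𝓝 1)) (hm1 : Tendsto χm atBot (𝓝 1))
    (hp0 : ∀ t : ℝ, t < -1 → χp t = 0) (hm0 : ∀ t : ℝ, 1 < t → χm t = 0) :
    IsClosed {f : ℝ →ᵇ ℂ | ∃ ap am a0 : ℝ →ᵇ ℂ,
        ap ∈ P2pi ∧ am ∈ P2pi ∧ a0 ∈ C0set ∧ f = ap * χp + am * χm + a0} ∧
      ∀ ap am a0 : ℝ →ᵇ ℂ, ap ∈ P2pi → am ∈ P2pi → a0 ∈ C0set →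
        ‖ap‖ ≤ ‖ap * χp + am * χm + a0‖ ∧ ‖am‖ ≤ ‖ap * χp + am * χm + a0‖ := by
  constructor
  · apply IsSeqClosed.isClosed
    intro F d hF hFd
    choose ap am a0 hapP hamP ha0 hFe using hF
    -- difference decompositions give Cauchyness
    have hdiff : ∀ m n : ℕ, F m - F n =
        (ap m - ap n) * χp + (am m - am n) * χm + (a0 m - a0 n) := by
      intro m n; rw [hFe m, hFe n]; ring
    have hperdiff : ∀ m n : ℕ, (ap m - ap n) ∈ P2pi ∧ (am m - am n) ∈ P2pi := by
      intro m n
      constructor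
      · intro x
        simp only [BoundedContinuousFunction.coe_sub, Pi.sub_apply]
        rw [hapP m x, hapP n x]
      · intro x
        simp only [BoundedContinuousFunction.coe_sub, Pi.sub_apply]
        rw [hamP m x, hamP n x]
    have ha0difftop : ∀ m n : ℕ, Tendsto (⇑(a0 m - a0 n)) atTop (𝓝 0) := by
      intro m n
      have := (ha0 m).1.sub (ha0 n).1
      simpa [Pi.sub_def] using this
    have ha0diffbot : ∀ m n : ℕ, Tendsto (⇑(a0 m - a0 n)) atBot (𝓝 0) := by
      intro m n
      have := (ha0 m).2.sub (ha0 n).2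
      simpa [Pi.sub_def] using this
    have hFc : CauchySeq F := hFd.cauchySeq
    have hapc : CauchySeq ap := by
      refine aux_cauchy_of_le hFc fun m n => ?_
      rw [hdiff m n]
      exact aux_norm_p χp χm hsum hm0 _ _ _ (hperdiff m n).1 (ha0difftop m n)
    have hamc : CauchySeq am := by
      refine aux_cauchy_of_le hFc fun m n => ?_
      rw [hdiff m n]
      exact aux_norm_m χp χm hsum hp0 _ _ _ (hperdiff m n).2 (ha0diffbot m n)
    obtain ⟨A, hA⟩ := cauchySeq_tendsto_of_complete hapc
    obtain ⟨B, hB⟩ := cauchySeq_tendsto_of_complete hamc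
    have hev : ∀ (x : ℝ) (g : ℕ → ℝ →ᵇ ℂ) (G : ℝ →ᵇ ℂ),
        Tendsto g atTop (𝓝 G) → Tendsto (fun n => g n x) atTop (𝓝 (G x)) := by
      intro x g G hg
      exact ((continuous_eval_const x).tendsto G).comp hg
    have hAper : A ∈ P2pi := by
      intro x
      refine tendsto_nhds_unique (hev (x + 2*π) ap A hA) ?_
      have : (fun n => ap n (x + 2*π)) = fun n => ap n x := by
        funext n; exact hapP n x
      rw [this]; exact hev x ap A hA
    have hBper : B ∈ P2pi := by
      intro x
      refine tendsto_nhds_unique (hev (x + 2*π) am B hB) ?_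
      have : (fun n => am n (x + 2*π)) = fun n => am n x := by
        funext n; exact hamP n x
      rw [this]; exact hev x am B hB
    set C : ℝ →ᵇ ℂ := d - A * χp - B * χm with hC
    have ha0lim : Tendsto (fun n => a0 n) atTop (𝓝 C) := by
      have heq : (fun n => a0 n) = fun n => F n - ap n * χp - am n * χm := by
        funext n; rw [hFe n]; ring
      rw [heq, hC]
      exact (hFd.sub (hA.mul tendsto_const_nhds)).sub (hB.mul tendsto_const_nhds)
    have hC0 : C ∈ C0set := by
      constructor
      · exact aux_tendsto_zero ha0lim atTop fun n => (ha0 n).1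
      · exact aux_tendsto_zero ha0lim atBot fun n => (ha0 n).2
    refine ⟨A, B, C, hAper, hBper, hC0, ?_⟩
    rw [hC]; ring
  · intro ap am a0 hap ham ha0
    exact ⟨aux_norm_p χp χm hsum hm0 ap am a0 hap ha0.1,
      aux_norm_m χp χm hsum hp0 ap am a0 ham ha0.2⟩
end

section
/- The spectrum of the commutative C*-algebra A# generated by CS(ℝ) and P_{2π} is homeomorphic to the compact subset {(x, e^{ix}) : x ∈ ℝ} ∪ ({−∞, +∞} × S¹) of [−∞, +∞] × S¹. -/
open Filter Topology Real BoundedContinuousFunction WeakDual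

namespace StmtAux

noncomputable def j : ℝ → EReal × Circle := fun x => ((x : EReal), Circle.exp x)

def Sset : Set (EReal × Circle) :=
  {p : EReal × Circle |
    (∃ x : ℝ, p.1 = (x : EReal) ∧ p.2 = Circle.exp x) ∨ p.1 = ⊤ ∨ p.1 = ⊥}

lemma tendsto_coe_atTop' : Tendsto (fun x : ℝ => (x : EReal)) atTop (𝓝 ⊤) := by
  rw [EReal.tendsto_nhds_top_iff_real]; intro x
  filter_upwards [eventually_gt_atTop x] with y hy; exact_mod_cast hy

lemma tendsto_coe_atBot' : Tendsto (fun x : ℝ => (x : EReal)) atBot (𝓝 ⊥) := by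
  rw [EReal.tendsto_nhds_bot_iff_real]; intro x
  filter_upwards [eventually_lt_atBot x] with y hy; exact_mod_cast hy

lemma closure_range_j : closure (Set.range j) = Sset := by
  apply Set.Subset.antisymm
  · -- closure ⊆ Sset
    intro p hp
    by_cases ht : p.1 = ⊤
    · exact Or.inr (Or.inl ht)
    by_cases hb : p.1 = ⊥
    · exact Or.inr (Or.inr hb)
    refine Or.inl ⟨p.1.toReal, (EReal.coe_toReal ht hb).symm, ?_⟩
    have hF : (𝓝[Set.range j] p).NeBot := mem_closure_iff_nhdsWithin_neBot.mp hp
    have h1 : Tendsto (fun q : EReal × Circle => q.2) (𝓝[Set.range j] p) (𝓝 p.2) :=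
      (continuous_snd.tendsto p).mono_left nhdsWithin_le_nhds
    have h2 : Tendsto (fun q : EReal × Circle => Circle.exp q.1.toReal)
        (𝓝[Set.range j] p) (𝓝 (Circle.exp p.1.toReal)) := by
      apply (Circle.exp.continuous.tendsto _).comp
      apply (EReal.tendsto_toReal ht hb).comp
      exact (continuous_fst.tendsto p).mono_left nhdsWithin_le_nhds
    have heq : ∀ q ∈ Set.range j, q.2 = Circle.exp q.1.toReal := by
      rintro q ⟨x, rfl⟩
      simp [j]
    have h1' : Tendsto (fun q : EReal × Circle => q.2) (𝓝[Set.range j] p)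
        (𝓝 (Circle.exp p.1.toReal)) := by
      refine h2.congr' ?_
      filter_upwards [self_mem_nhdsWithin] with q hq
      exact (heq q hq).symm
    exact tendsto_nhds_unique h1 h1'
  · -- Sset ⊆ closure
    rintro p (⟨x, hx1, hx2⟩ | ht | hb)
    · apply subset_closure
      exact ⟨x, by ext <;> simp [j, hx1.symm, hx2.symm]⟩
    · -- p.1 = ⊤
      obtain ⟨θ, hθ⟩ : ∃ θ : ℝ, Circle.exp θ = p.2 := ⟨Complex.arg p.2, Circle.exp_arg p.2⟩
      have : Tendsto (fun n : ℕ => j (θ + n * (2 * π))) atTop (𝓝 p) := by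
        have hfst : Tendsto (fun n : ℕ => ((θ + n * (2 * π) : ℝ) : EReal)) atTop (𝓝 ⊤) := by
          apply tendsto_coe_atTop'.comp
          apply tendsto_atTop_add_const_left
          apply Tendsto.atTop_mul_const (by positivity)
          exact tendsto_natCast_atTop_atTop
        have hsnd : ∀ n : ℕ, Circle.exp (θ + n * (2 * π)) = p.2 := fun n => by
          rw [← hθ]; exact (Circle.periodic_exp.nat_mul n) θ
        have h3 : Tendsto (fun n : ℕ => (((θ + n * (2 * π) : ℝ) : EReal), p.2)) atTop (𝓝 (p.1, p.2)) := by
          rw [ht]; exact hfst.prodMk_nhds tendsto_const_nhds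
        refine Tendsto.congr ?_ h3
        intro n; simp [j, hsnd n]
      exact mem_closure_of_tendsto this (Eventually.of_forall fun n => Set.mem_range_self _)
    · obtain ⟨θ, hθ⟩ : ∃ θ : ℝ, Circle.exp θ = p.2 := ⟨Complex.arg p.2, Circle.exp_arg p.2⟩
      have : Tendsto (fun n : ℕ => j (θ - n * (2 * π))) atTop (𝓝 p) := by
        have hfst : Tendsto (fun n : ℕ => ((θ - n * (2 * π) : ℝ) : EReal)) atTop (𝓝 ⊥) := by
          apply tendsto_coe_atBot'.comp
          have h4 : Tendsto (fun n : ℕ => (n : ℝ) * (2 * π)) atTop atTop :=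
            Tendsto.atTop_mul_const (by positivity) tendsto_natCast_atTop_atTop
          have h5 : Tendsto (fun n : ℕ => θ + -((n : ℝ) * (2 * π))) atTop atBot :=
            tendsto_atBot_add_const_left _ θ (tendsto_neg_atTop_atBot.comp h4)
          exact h5.congr fun n => by ring
        have hsnd : ∀ n : ℕ, Circle.exp (θ - n * (2 * π)) = p.2 := fun n => by
          rw [← hθ]; exact Circle.periodic_exp.sub_nat_mul_eq n
        have h3 : Tendsto (fun n : ℕ => (((θ - n * (2 * π) : ℝ) : EReal), p.2)) atTop (𝓝 (p.1, p.2)) := by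
          rw [hb]; exact hfst.prodMk_nhds tendsto_const_nhds
        refine Tendsto.congr ?_ h3
        intro n; simp [j, hsnd n]
      exact mem_closure_of_tendsto this (Eventually.of_forall fun n => Set.mem_range_self _)

lemma isClosed_Sset : IsClosed Sset := closure_range_j ▸ isClosed_closure

instance : CompactSpace Sset :=
  isCompact_iff_compactSpace.mp (isClosed_Sset.isCompact)

lemma j_mem_Sset (x : ℝ) : j x ∈ Sset := Or.inl ⟨x, rfl, rfl⟩

lemma continuous_j : Continuous j :=
  continuous_coe_real_ereal.prodMk (Circle.exp).continuous

noncomputable def jS : C(ℝ, Sset) :=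
  ⟨fun x => ⟨j x, j_mem_Sset x⟩, continuous_j.subtype_mk _⟩

lemma denseRange_jS : DenseRange jS := by
  rw [denseRange_iff_closure_range]
  have h1 : closure (Set.range jS) =
      Subtype.val ⁻¹' closure (Subtype.val '' Set.range jS) :=
    Topology.IsInducing.subtypeVal.closure_eq_preimage_closure_image _
  have h2 : Subtype.val '' Set.range jS = Set.range j := by
    ext q; constructor
    · rintro ⟨t, ⟨x, hx⟩, rfl⟩; exact ⟨x, congrArg Subtype.val hx⟩
    · rintro ⟨x, rfl⟩; exact ⟨jS x, ⟨x, rfl⟩, rfl⟩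
  rw [h1, h2, closure_range_j]
  ext s; simpa using s.2

noncomputable def Phi : C(Sset, ℂ) →ₐ[ℂ] (ℝ →ᵇ ℂ) where
  toFun f := (mkOfCompact f).compContinuous jS
  map_one' := by ext x; simp
  map_mul' f g := by ext x; simp
  map_zero' := by ext x; simp
  map_add' f g := by ext x; simp
  commutes' c := by ext x; simp

lemma Phi_apply (f : C(Sset, ℂ)) (x : ℝ) : Phi f x = f (jS x) := rfl

lemma norm_Phi (f : C(Sset, ℂ)) : ‖Phi f‖ = ‖f‖ := by
  apply le_antisymm
  · exact (norm_compContinuous_le _ _).trans (by rw [norm_mkOfCompact])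
  · rw [← norm_mkOfCompact f]
    set g := mkOfCompact f
    apply (norm_le (norm_nonneg (g.compContinuous jS))).mpr
    intro s
    have hK : IsClosed {t : Sset | ‖g t‖ ≤ ‖g.compContinuous jS‖} :=
      isClosed_le ((map_continuous g).norm) continuous_const
    have hsub : Set.range jS ⊆ {t : Sset | ‖g t‖ ≤ ‖g.compContinuous jS‖} := by
      rintro t ⟨x, rfl⟩
      exact (g.compContinuous jS).norm_coe_le_norm x
    exact closure_minimal hsub hK (denseRange_jS s)

lemma isometry_Phi : Isometry (Phi : C(Sset, ℂ) → (ℝ →ᵇ ℂ)) :=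
  AddMonoidHomClass.isometry_of_norm Phi norm_Phi

lemma star_mem_union {f : ℝ →ᵇ ℂ} (hf : f ∈ CSset ∪ P2pi) : star f ∈ CSset ∪ P2pi := by
  rcases hf with ⟨⟨l, hl⟩, ⟨l', hl'⟩⟩ | hf
  · refine Or.inl ⟨⟨star l, ?_⟩, ⟨star l', ?_⟩⟩
    · exact ((continuous_star.tendsto l).comp hl).congr fun x => rfl
    · exact ((continuous_star.tendsto l').comp hl').congr fun x => rfl
  · exact Or.inr fun x => congrArg star (hf x)

lemma star_mem_adjoin {a : ℝ →ᵇ ℂ} (ha : a ∈ Algebra.adjoin ℂ (CSset ∪ P2pi)) :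
    star a ∈ Algebra.adjoin ℂ (CSset ∪ P2pi) := by
  induction ha using Algebra.adjoin_induction with
  | mem x hx => exact Algebra.subset_adjoin (star_mem_union hx)
  | algebraMap r =>
    rw [← algebraMap_star_comm]
    exact Subalgebra.algebraMap_mem _ _
  | add x y _ _ hx hy => rw [star_add]; exact add_mem hx hy
  | mul x y _ _ hx hy => rw [star_mul]; exact mul_mem hy hx

lemma star_mem_Asharp {a : ℝ →ᵇ ℂ} (ha : a ∈ Asharp) : star a ∈ Asharp := by
  have h1 : (Asharp : Set (ℝ →ᵇ ℂ)) = closure (Algebra.adjoin ℂ (CSset ∪ P2pi)) :=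
    Subalgebra.topologicalClosure_coe _
  have h2 : star a ∈ star '' closure ((Algebra.adjoin ℂ (CSset ∪ P2pi) : Set (ℝ →ᵇ ℂ))) := by
    exact ⟨a, by rw [← SetLike.mem_coe, h1] at ha; exact ha, rfl⟩
  have h3 := (image_closure_subset_closure_image (continuous_star)) h2
  have h4 : star '' (Algebra.adjoin ℂ (CSset ∪ P2pi) : Set (ℝ →ᵇ ℂ)) ⊆
      (Algebra.adjoin ℂ (CSset ∪ P2pi) : Set (ℝ →ᵇ ℂ)) := by
    rintro b ⟨c, hc, rfl⟩; exact star_mem_adjoin hc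
  have := (closure_mono h4) h3
  rw [← SetLike.mem_coe, h1]; exact this

/-- Extend a real function to `EReal` with prescribed values at `⊤` and `⊥`. -/
noncomputable def extendE (f : ℝ → ℂ) (lt lb : ℂ) : EReal → ℂ :=
  WithBot.recBotCoe lb (WithTop.recTopCoe lt f)

@[simp] lemma extendE_coe (f : ℝ → ℂ) (lt lb : ℂ) (r : ℝ) : extendE f lt lb r = f r := rfl
@[simp] lemma extendE_top (f : ℝ → ℂ) (lt lb : ℂ) : extendE f lt lb ⊤ = lt := rfl
@[simp] lemma extendE_bot (f : ℝ → ℂ) (lt lb : ℂ) : extendE f lt lb ⊥ = lb := rfl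

lemma continuous_extendE {f : ℝ → ℂ} {lt lb : ℂ} (hf : Continuous f)
    (ht : Tendsto f atTop (𝓝 lt)) (hb : Tendsto f atBot (𝓝 lb)) :
    Continuous (extendE f lt lb) := by
  rw [continuous_iff_continuousAt]
  intro x
  induction x using EReal.rec with
  | coe r =>
    rw [ContinuousAt, EReal.nhds_coe, tendsto_map'_iff]
    exact (hf.tendsto r).congr fun y => rfl
  | top =>
    rw [ContinuousAt, ← nhdsNE_sup_pure, tendsto_sup]
    constructor
    · rw [EReal.nhdsWithin_top, tendsto_map'_iff]
      exact ht.congr fun y => rfl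
    · exact tendsto_pure_nhds _ _
  | bot =>
    rw [ContinuousAt, ← nhdsNE_sup_pure, tendsto_sup]
    constructor
    · rw [EReal.nhdsWithin_bot, tendsto_map'_iff]
      exact hb.congr fun y => rfl
    · exact tendsto_pure_nhds _ _

/-- Lift a `2π`-periodic continuous function to the circle. -/
noncomputable def circLift (f : ℝ → ℂ) (hp : Function.Periodic f (2 * π)) : Circle → ℂ :=
  fun z => hp.lift ((AddCircle.homeomorphCircle').symm z)

lemma continuous_circLift {f : ℝ → ℂ} (hp : Function.Periodic f (2 * π)) (hf : Continuous f) :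
    Continuous (circLift f hp) := by
  exact Continuous.comp (hf.quotient_liftOn' _) (AddCircle.homeomorphCircle').symm.continuous

lemma circLift_exp {f : ℝ → ℂ} (hp : Function.Periodic f (2 * π)) (x : ℝ) :
    circLift f hp (Circle.exp x) = f x := by
  have h : (AddCircle.homeomorphCircle').symm (Circle.exp x) = (x : AddCircle (2*π)) := by
    rw [← AddCircle.homeomorphCircle'_apply_mk x, Homeomorph.symm_apply_apply]
  rw [circLift, h, Function.Periodic.lift_coe]

lemma range_closed : IsClosed ((Phi.range : Subalgebra ℂ (ℝ →ᵇ ℂ)) : Set (ℝ →ᵇ ℂ)) := by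
  have h : IsClosed (Set.range (Phi : C(Sset, ℂ) → (ℝ →ᵇ ℂ))) :=
    isometry_Phi.isClosedEmbedding.isClosed_range
  rw [AlgHom.coe_range]; exact h

lemma Asharp_le_range : Asharp ≤ Phi.range := by
  refine Subalgebra.topologicalClosure_minimal (Algebra.adjoin_le ?_) range_closed
  · rintro f (⟨⟨lt, hlt⟩, ⟨lb, hlb⟩⟩ | hper)
    · refine ⟨ContinuousMap.mk (fun s => extendE f lt lb s.val.1)
        ((continuous_extendE f.continuous hlt hlb).comp
          (continuous_fst.comp continuous_subtype_val)), ?_⟩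
      ext x; rfl
    · refine ⟨ContinuousMap.mk (fun s => circLift f hper s.val.2)
        ((continuous_circLift hper f.continuous).comp
          (continuous_snd.comp continuous_subtype_val)), ?_⟩
      ext x; exact circLift_exp hper x

noncomputable def Tsub : StarSubalgebra ℂ C(Sset, ℂ) where
  toSubalgebra := Asharp.comap Phi
  star_mem' := by
    intro f hf
    have h : Phi (star f) = star (Phi f) := by ext x; rfl
    show Phi (star f) ∈ Asharp
    rw [h]
    exact star_mem_Asharp hf

lemma mem_Tsub {f : C(Sset, ℂ)} : f ∈ Tsub ↔ Phi f ∈ Asharp := Iff.rfl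

lemma Tsub_sep : Tsub.SeparatesPoints := by
  intro p q hpq
  by_cases h1 : (p : EReal × Circle).1 = (q : EReal × Circle).1
  · have h2 : (p : EReal × Circle).2 ≠ (q : EReal × Circle).2 := by
      intro h2; exact hpq (Subtype.ext (Prod.ext h1 h2))
    refine ⟨_, ⟨ContinuousMap.mk (fun s : Sset => ((s : EReal × Circle).2 : ℂ))
      (continuous_induced_dom.comp (continuous_snd.comp continuous_subtype_val)), ?_, rfl⟩, ?_⟩
    · apply mem_Tsub.mpr
      have hmem : Phi (ContinuousMap.mk (fun s : Sset => ((s : EReal × Circle).2 : ℂ))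
          (continuous_induced_dom.comp (continuous_snd.comp continuous_subtype_val))) ∈ P2pi := by
        intro x
        show ((Circle.exp (x + 2 * π) : Circle) : ℂ) = ((Circle.exp x : Circle) : ℂ)
        rw [Circle.periodic_exp x]
      exact (Subalgebra.le_topologicalClosure _) (Algebra.subset_adjoin (Or.inr hmem))
    · simpa using fun h => h2 (Subtype.ext h)
  · obtain ⟨g, hg0, hg1, -⟩ := exists_continuous_zero_one_of_isClosed
      (isClosed_singleton (x := (p : EReal × Circle).1))
      (isClosed_singleton (x := (q : EReal × Circle).1))
      (Set.disjoint_singleton.mpr h1)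
    set F : C(Sset, ℂ) := ContinuousMap.mk (fun s : Sset => ((g (s : EReal × Circle).1 : ℝ) : ℂ))
      (Complex.continuous_ofReal.comp (g.continuous.comp
        (continuous_fst.comp continuous_subtype_val))) with hF
    refine ⟨_, ⟨F, ?_, rfl⟩, ?_⟩
    · apply mem_Tsub.mpr
      have hmem : Phi F ∈ CSset := by
        constructor
        · exact ⟨(g ⊤ : ℂ), (Complex.continuous_ofReal.tendsto _).comp
            ((g.continuous.tendsto ⊤).comp tendsto_coe_atTop')⟩
        · exact ⟨(g ⊥ : ℂ), (Complex.continuous_ofReal.tendsto _).comp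
            ((g.continuous.tendsto ⊥).comp tendsto_coe_atBot')⟩
      exact (Subalgebra.le_topologicalClosure _) (Algebra.subset_adjoin (Or.inl hmem))
    · have e0 : g (p : EReal × Circle).1 = 0 := hg0 rfl
      have e1 : g (q : EReal × Circle).1 = 1 := hg1 rfl
      simp [hF, e0, e1]

lemma range_le_Asharp : Phi.range ≤ Asharp := by
  rintro b ⟨f, rfl⟩
  have htop := ContinuousMap.starSubalgebra_topologicalClosure_eq_top_of_separatesPoints Tsub Tsub_sep
  have hf : f ∈ Tsub.topologicalClosure := by rw [htop]; trivial
  have hf' : f ∈ closure (Tsub : Set C(Sset, ℂ)) := hf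
  have hcl : IsClosed ((Asharp : Subalgebra ℂ (ℝ →ᵇ ℂ)) : Set (ℝ →ᵇ ℂ)) := by
    rw [Asharp, Subalgebra.topologicalClosure_coe]; exact isClosed_closure
  have hsub : closure ((Tsub : Set C(Sset, ℂ))) ⊆ ⇑Phi ⁻¹' (Asharp : Set (ℝ →ᵇ ℂ)) := by
    apply closure_minimal ?_ (hcl.preimage isometry_Phi.continuous)
    intro f hf; exact hf
  exact hsub hf'

lemma range_Phi : Phi.range = Asharp :=
  le_antisymm range_le_Asharp Asharp_le_range

noncomputable def charHomeo {A B : Type*} [TopologicalSpace A] [TopologicalSpace B]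
    [Ring A] [Ring B] [Algebra ℂ A] [Algebra ℂ B]
    (e : A ≃ₐ[ℂ] B) (he : Continuous e) (he' : Continuous e.symm) :
    characterSpace ℂ A ≃ₜ characterSpace ℂ B where
  toFun φ := ⟨ContinuousLinearMap.comp (WeakDual.CharacterSpace.toCLM φ) ⟨e.symm.toLinearMap, he'⟩, by
      intro h0
      apply φ.2.1
      refine DFunLike.ext _ _ fun a => ?_
      have h : φ (e.symm (e a)) = (0 : ℂ) := congrArg (fun ψ : WeakDual ℂ B => ψ (e a)) h0
      rw [AlgEquiv.symm_apply_apply] at h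
      exact h, by
      intro x y
      show φ (e.symm (x * y)) = φ (e.symm x) * φ (e.symm y)
      rw [map_mul e.symm]
      exact φ.2.2 _ _⟩
  invFun φ := ⟨ContinuousLinearMap.comp (WeakDual.CharacterSpace.toCLM φ) ⟨e.toLinearMap, he⟩, by
      intro h0
      apply φ.2.1
      refine DFunLike.ext _ _ fun b => ?_
      have h : φ (e (e.symm b)) = (0 : ℂ) := congrArg (fun ψ : WeakDual ℂ A => ψ (e.symm b)) h0
      rw [AlgEquiv.apply_symm_apply] at h
      exact h, by
      intro x y
      show φ (e (x * y)) = φ (e x) * φ (e y)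
      rw [map_mul e]
      exact φ.2.2 _ _⟩
  left_inv φ := by
    ext a
    show φ (e.symm (e a)) = φ a
    rw [AlgEquiv.symm_apply_apply]
  right_inv φ := by
    ext b
    show φ (e (e.symm b)) = φ b
    rw [AlgEquiv.apply_symm_apply]
  continuous_toFun := by
    apply Continuous.subtype_mk
    exact WeakDual.continuous_of_continuous_eval fun b =>
      (WeakDual.eval_continuous (e.symm b)).comp continuous_subtype_val
  continuous_invFun := by
    apply Continuous.subtype_mk
    exact WeakDual.continuous_of_continuous_eval fun a =>
      (WeakDual.eval_continuous (e a)).comp continuous_subtype_val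

noncomputable def eAlg : C(Sset, ℂ) ≃ₐ[ℂ] Asharp :=
  (AlgEquiv.ofInjective Phi isometry_Phi.injective).trans
    (Subalgebra.equivOfEq _ _ range_Phi)

lemma eAlg_val (f : C(Sset, ℂ)) : ((eAlg f : Asharp) : ℝ →ᵇ ℂ) = Phi f := rfl

lemma isometry_eAlg : Isometry (eAlg : C(Sset, ℂ) → Asharp) := by
  intro a b
  rw [← isometry_subtype_coe.edist_eq (eAlg a) (eAlg b)]
  show edist ((eAlg a : Asharp) : ℝ →ᵇ ℂ) ((eAlg b : Asharp) : ℝ →ᵇ ℂ) = _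
  rw [eAlg_val, eAlg_val]
  exact isometry_Phi a b

lemma isometry_eAlg_symm : Isometry (eAlg.symm : Asharp → C(Sset, ℂ)) := by
  intro a b
  rw [← isometry_eAlg (eAlg.symm a) (eAlg.symm b)]
  rw [AlgEquiv.apply_symm_apply, AlgEquiv.apply_symm_apply]

noncomputable def finalHomeo : characterSpace ℂ Asharp ≃ₜ Sset :=
  ((charHomeo eAlg isometry_eAlg.continuous isometry_eAlg_symm.continuous).symm).trans
    (WeakDual.CharacterSpace.homeoEval Sset ℂ).symm

end StmtAux

/-- The spectrum of `A#` is homeomorphic to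
`{(x, e^{ix}) : x ∈ ℝ} ∪ ({−∞, +∞} × S¹) ⊆ [−∞, +∞] × S¹`,
where `[−∞,+∞]` is realized as `EReal`. -/
theorem stmt_10 :
    Nonempty ((characterSpace ℂ Asharp) ≃ₜ
      ({p : EReal × Circle |
        (∃ x : ℝ, p.1 = (x : EReal) ∧ p.2 = Circle.exp x) ∨ p.1 = ⊤ ∨ p.1 = ⊥} :
          Set (EReal × Circle))) := by
  exact ⟨StmtAux.finalHomeo⟩
end
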